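/- arXiv:2012.08161 — 5 statements merged into one kernel-verified Lean document; each statement's English description precedes it below -/
import Mathlib

section
/- Let w be an odd prime, q a prime power, and n a positive integer with gcd(n,q)=1 and ord_{rad(n)}(q) = w^2. If v_w(n) = 0 or v_w(n) ≥ v_w(q^{w^2}-1), then gcd(n, q^{w^2}-1) = gcd(n, q-1)·gcd(n, (q^{w^2}-1)/(q-1)) = gcd(n, q^w-1)·gcd(n, (q^{w^2}-1)/(q^w-1)); moreover lcm(q-1, gcd(n, q^{w^2}-1)) = (q-1)·gcd(n, (q^{w^2}-1)/(q-1)) and lcm(q^w-1, gcd(n, q^{w^2}-1)) = (q^w-1)·gcd(n, (q^{w^2}-1)/(q^w-1)). -/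
/-- `rad n` is the product of the distinct prime divisors of `n`. -/
def rad (n : ℕ) : ℕ := ∏ p ∈ n.primeFactors, p

/-! Write `a^{w^j} - 1 = d·S` with `d = a - 1`. Since `S = Σ_{i<w^j} a^i ≡ w^j (mod d)`, `gcd(d, S)`
is a power of `w`, so `w` is the only prime dividing both `d` and `S`; at `w` the hypothesis on
`v_w(n)` makes `gcd(n, ·)` multiplicative on `d·S` all the same. The lcm identity then follows from
`gcd(d, gcd(n, d·S)) = gcd(n, d)`. Apply this to `a = q, j = 2` and to `a = q^w, j = 1`. -/

namespace Nat

lemma gcd_sub_one_pow_sub_one_div_sub_one {a : ℕ} (ha : 2 ≤ a) (k : ℕ) :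
    gcd (a - 1) ((a ^ k - 1) / (a - 1)) = gcd (a - 1) k := by
  have hmod : ∑ i ∈ Finset.range k, a ^ i ≡ k [MOD a - 1] :=
    calc ∑ i ∈ Finset.range k, a ^ i
        ≡ ∑ i ∈ Finset.range k, 1 ^ i [MOD a - 1] :=
          ModEq.sum fun i _ => (modEq_sub (by omega)).pow i
      _ = k := by simp
  rw [← geomSum_eq ha, gcd_comm, hmod.gcd_eq, gcd_comm]

lemma gcd_mul_eq_mul_gcd_of_factorization_le {n d m : ℕ} (hd : d ≠ 0) (hm : m ≠ 0)
    (h : ∀ p, p ∣ d → p ∣ m → n.factorization p ≠ 0 →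
      (d * m).factorization p ≤ n.factorization p) :
    gcd n (d * m) = gcd n d * gcd n m := by
  rcases eq_or_ne n 0 with rfl | hn
  · simp
  refine eq_of_factorization_eq (gcd_ne_zero_left hn)
    (mul_ne_zero (gcd_ne_zero_left hn) (gcd_ne_zero_left hn)) fun p => ?_
  have hdm := h p
  rw [factorization_mul hd hm] at hdm
  rw [factorization_gcd hn (mul_ne_zero hd hm), factorization_mul (gcd_ne_zero_left hn)
    (gcd_ne_zero_left hn), factorization_gcd hn hd, factorization_gcd hn hm, factorization_mul hd hm]
  simp only [Finsupp.inf_apply, Finsupp.add_apply] at hdm ⊢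
  by_cases hpd : p ∣ d
  · by_cases hpm : p ∣ m
    · have := hdm hpd hpm
      omega
    · simp [factorization_eq_zero_of_not_dvd hpm]
  · simp [factorization_eq_zero_of_not_dvd hpd]

lemma lcm_gcd_mul_eq_mul_gcd {n d m : ℕ} (hd : d ≠ 0)
    (h : gcd n (d * m) = gcd n d * gcd n m) :
    lcm d (gcd n (d * m)) = d * gcd n m := by
  have hgcd : gcd d (gcd n (d * m)) = gcd n d := by
    rw [← gcd_assoc, gcd_eq_left ((gcd_dvd_left d n).trans (dvd_mul_right d m)), gcd_comm]
  apply Nat.eq_of_mul_eq_mul_left (gcd_pos_of_pos_right n (pos_of_ne_zero hd))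
  rw [← hgcd, gcd_mul_lcm, hgcd, h]
  ring

end Nat

lemma gcd_lcm_split_pow_prime_pow_sub_one {w a n j : ℕ} (hw : w.Prime) (ha : 2 ≤ a)
    (hv : n.factorization w = 0 ∨ (a ^ w ^ j - 1).factorization w ≤ n.factorization w) :
    Nat.gcd n (a ^ w ^ j - 1) = Nat.gcd n (a - 1) * Nat.gcd n ((a ^ w ^ j - 1) / (a - 1)) ∧
    Nat.lcm (a - 1) (Nat.gcd n (a ^ w ^ j - 1))
      = (a - 1) * Nat.gcd n ((a ^ w ^ j - 1) / (a - 1)) := by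
  have hd : a - 1 ≠ 0 := by omega
  obtain ⟨S, hA⟩ := Nat.sub_one_dvd_pow_sub_one a (w ^ j)
  have hS : S ≠ 0 := by
    have : a ≤ a ^ w ^ j := Nat.le_self_pow (pow_ne_zero j hw.ne_zero) a
    rintro rfl
    rw [mul_zero] at hA
    omega
  have hgcdS : Nat.gcd (a - 1) S ∣ w ^ j := by
    have h := Nat.gcd_sub_one_pow_sub_one_div_sub_one ha (w ^ j)
    rw [hA, Nat.mul_div_cancel_left _ (Nat.pos_of_ne_zero hd)] at h
    exact h ▸ Nat.gcd_dvd_right _ _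
  rw [hA] at hv
  rw [hA, Nat.mul_div_cancel_left _ (Nat.pos_of_ne_zero hd)]
  have hgcd : Nat.gcd n ((a - 1) * S) = Nat.gcd n (a - 1) * Nat.gcd n S := by
    refine Nat.gcd_mul_eq_mul_gcd_of_factorization_le hd hS fun p hpd hpS hpn => ?_
    have hp : p.Prime := Nat.prime_of_mem_primeFactors (Finsupp.mem_support_iff.mpr hpn)
    obtain rfl : p = w := (Nat.prime_dvd_prime_iff_eq hp hw).mp
      (hp.dvd_of_dvd_pow ((Nat.dvd_gcd hpd hpS).trans hgcdS))
    exact hv.resolve_left hpn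
  exact ⟨hgcd, Nat.lcm_gcd_mul_eq_mul_gcd hd hgcd⟩

theorem gcd_lcm_identities_case_zero_or_large_general (w q n : ℕ) (hw : w.Prime)
    (hq : IsPrimePow q)
    (hv : n.factorization w = 0 ∨ (q ^ w ^ 2 - 1).factorization w ≤ n.factorization w) :
    Nat.gcd n (q ^ w ^ 2 - 1)
        = Nat.gcd n (q - 1) * Nat.gcd n ((q ^ w ^ 2 - 1) / (q - 1)) ∧
    Nat.gcd n (q ^ w ^ 2 - 1)
        = Nat.gcd n (q ^ w - 1) * Nat.gcd n ((q ^ w ^ 2 - 1) / (q ^ w - 1)) ∧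
    Nat.lcm (q - 1) (Nat.gcd n (q ^ w ^ 2 - 1))
        = (q - 1) * Nat.gcd n ((q ^ w ^ 2 - 1) / (q - 1)) ∧
    Nat.lcm (q ^ w - 1) (Nat.gcd n (q ^ w ^ 2 - 1))
        = (q ^ w - 1) * Nat.gcd n ((q ^ w ^ 2 - 1) / (q ^ w - 1)) := by
  have hq2 : 2 ≤ q := hq.two_le
  have hqw : 2 ≤ q ^ w := hq2.trans (Nat.le_self_pow hw.ne_zero q)
  have hpow : (q ^ w) ^ w ^ 1 = q ^ w ^ 2 := by rw [← pow_mul, pow_one, sq]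
  obtain ⟨h1, h3⟩ := gcd_lcm_split_pow_prime_pow_sub_one (j := 2) hw hq2 hv
  obtain ⟨h2, h4⟩ := gcd_lcm_split_pow_prime_pow_sub_one (j := 1) hw hqw (hpow ▸ hv)
  rw [hpow] at h2 h4
  exact ⟨h1, h2, h3, h4⟩

/-- Let `w` be an odd prime, `q` a prime power, and `n` a positive integer with
`gcd(n,q) = 1` and `ord_{rad(n)}(q) = w²`. If `v_w(n) = 0` or `v_w(n) ≥ v_w(q^{w²}−1)`,
then `gcd(n, q^{w²}−1) = gcd(n, q−1)·gcd(n, (q^{w²}−1)/(q−1))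
= gcd(n, q^w−1)·gcd(n, (q^{w²}−1)/(q^w−1))`; moreover
`lcm(q−1, gcd(n, q^{w²}−1)) = (q−1)·gcd(n, (q^{w²}−1)/(q−1))` and
`lcm(q^w−1, gcd(n, q^{w²}−1)) = (q^w−1)·gcd(n, (q^{w²}−1)/(q^w−1))`. -/
theorem gcd_lcm_identities_case_zero_or_large (w q n : ℕ) (hw : w.Prime) (hwodd : Odd w)
    (hq : IsPrimePow q) (hn : 0 < n) (hcop : Nat.gcd n q = 1)
    (hord : orderOf (q : ZMod (rad n)) = w ^ 2)
    (hv : n.factorization w = 0 ∨ (q ^ w ^ 2 - 1).factorization w ≤ n.factorization w) :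
    Nat.gcd n (q ^ w ^ 2 - 1)
        = Nat.gcd n (q - 1) * Nat.gcd n ((q ^ w ^ 2 - 1) / (q - 1)) ∧
    Nat.gcd n (q ^ w ^ 2 - 1)
        = Nat.gcd n (q ^ w - 1) * Nat.gcd n ((q ^ w ^ 2 - 1) / (q ^ w - 1)) ∧
    Nat.lcm (q - 1) (Nat.gcd n (q ^ w ^ 2 - 1))
        = (q - 1) * Nat.gcd n ((q ^ w ^ 2 - 1) / (q - 1)) ∧
    Nat.lcm (q ^ w - 1) (Nat.gcd n (q ^ w ^ 2 - 1))
        = (q ^ w - 1) * Nat.gcd n ((q ^ w ^ 2 - 1) / (q ^ w - 1)) :=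
  gcd_lcm_identities_case_zero_or_large_general w q n hw hq hv
end

section
/- Let w be an odd prime, q a prime power, and n a positive integer with gcd(n,q)=1 and ord_{rad(n)}(q) = w^2. If 1 = v_w(n) < v_w(q^{w^2}-1), then gcd(n, q^{w^2}-1) = gcd(n/w, q-1)·gcd(n, (q^{w^2}-1)/(q-1)) = gcd(n/w, q^w-1)·gcd(n, (q^{w^2}-1)/(q^w-1)); moreover lcm(q-1, gcd(n, q^{w^2}-1)) = ((q-1)/w)·gcd(n, (q^{w^2}-1)/(q-1)) and lcm(q^w-1, gcd(n, q^{w^2}-1)) = ((q^w-1)/w)·gcd(n, (q^{w^2}-1)/(q^w-1)). -/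
open Finset

theorem sum_range_pow_dvd_iff {p x m : ℕ} (hx : x ≡ 1 [MOD p]) :
    p ∣ ∑ i ∈ range m, x ^ i ↔ p ∣ m := by
  rw [← ZMod.natCast_eq_natCast_iff] at hx
  simp [← ZMod.natCast_eq_zero_iff, hx]

theorem modEq_one_of_pow_prime_pow_modEq_one {w x k : ℕ} (hw : w.Prime)
    (h : x ^ w ^ k ≡ 1 [MOD w]) : x ≡ 1 [MOD w] := by
  have := Fact.mk hw
  rw [← ZMod.natCast_eq_natCast_iff] at h ⊢
  simpa [ZMod.pow_card_pow] using h

section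
variable {n w M K : ℕ}

theorem factorization_eq_zero_or_eq_zero_of_ne
    (hMK : ∀ p, p.Prime → p ∣ M → p ∣ K → p = w) {p : ℕ} (hp : p ≠ w) :
    M.factorization p = 0 ∨ K.factorization p = 0 := by
  by_contra! h
  exact hp (hMK p (Nat.prime_of_mem_primeFactors (Finsupp.mem_support_iff.2 h.1))
    (Nat.dvd_of_factorization_pos h.1) (Nat.dvd_of_factorization_pos h.2))

theorem gcd_mul_eq_gcd_div_mul_gcd (hw : w.Prime) (hn : n.factorization w = 1)
    (hM : M ≠ 0) (hK : K ≠ 0) (hwM : w ∣ M) (hwK : w ∣ K)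
    (hMK : ∀ p, p.Prime → p ∣ M → p ∣ K → p = w) :
    Nat.gcd n (M * K) = Nat.gcd (n / w) M * Nat.gcd n K := by
  have hn0 : n ≠ 0 := by rintro rfl; simp at hn
  have hwn : w ∣ n := Nat.dvd_of_factorization_pos (by omega)
  have hnw : n / w ≠ 0 := (Nat.div_pos (Nat.le_of_dvd (by omega) hwn) hw.pos).ne'
  refine Nat.eq_of_factorization_eq (Nat.gcd_ne_zero_left hn0)
    (mul_ne_zero (Nat.gcd_ne_zero_left hnw) (Nat.gcd_ne_zero_left hn0)) fun p => ?_
  simp only [Nat.factorization_gcd hn0 (mul_ne_zero hM hK), Nat.factorization_mul hM hK,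
    Nat.factorization_mul (Nat.gcd_ne_zero_left hnw) (Nat.gcd_ne_zero_left hn0),
    Nat.factorization_gcd hnw hM, Nat.factorization_gcd hn0 hK, Nat.factorization_div hwn,
    hw.factorization, Finsupp.inf_apply, Finsupp.add_apply, Finsupp.tsub_apply,
    Finsupp.single_apply]
  rcases eq_or_ne p w with rfl | hpw
  · have := hw.factorization_pos_of_dvd hM hwM
    have := hw.factorization_pos_of_dvd hK hwK
    simp only [if_true]
    omega
  · rcases factorization_eq_zero_or_eq_zero_of_ne hMK hpw with h | h <;>
      simp [Ne.symm hpw, h]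

theorem lcm_gcd_mul_eq_div_mul_gcd (hw : w.Prime) (hn : n.factorization w = 1)
    (hM : M ≠ 0) (hK : K ≠ 0) (hwM : w ∣ M) (hwK : w ∣ K)
    (hMK : ∀ p, p.Prime → p ∣ M → p ∣ K → p = w) :
    Nat.lcm M (Nat.gcd n (M * K)) = M / w * Nat.gcd n K := by
  have hn0 : n ≠ 0 := by rintro rfl; simp at hn
  have hMw : M / w ≠ 0 := (Nat.div_pos (Nat.le_of_dvd (by omega) hwM) hw.pos).ne'
  refine Nat.eq_of_factorization_eq (Nat.lcm_ne_zero hM (Nat.gcd_ne_zero_left hn0))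
    (mul_ne_zero hMw (Nat.gcd_ne_zero_left hn0)) fun p => ?_
  simp only [Nat.factorization_lcm hM (Nat.gcd_ne_zero_left hn0),
    Nat.factorization_gcd hn0 (mul_ne_zero hM hK), Nat.factorization_mul hM hK,
    Nat.factorization_mul hMw (Nat.gcd_ne_zero_left hn0),
    Nat.factorization_gcd hn0 hK, Nat.factorization_div hwM,
    hw.factorization, Finsupp.sup_apply, Finsupp.inf_apply, Finsupp.add_apply,
    Finsupp.tsub_apply, Finsupp.single_apply]
  rcases eq_or_ne p w with rfl | hpw
  · have := hw.factorization_pos_of_dvd hM hwM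
    have := hw.factorization_pos_of_dvd hK hwK
    simp only [if_true]
    omega
  · rcases factorization_eq_zero_or_eq_zero_of_ne hMK hpw with h | h <;>
      simp [Ne.symm hpw, h]

end

theorem gcd_lcm_pow_prime_pow_sub_one {n w x k : ℕ} (hw : w.Prime) (hn : n.factorization w = 1)
    (hx : 2 ≤ x) (hxw : x ≡ 1 [MOD w]) (hk : k ≠ 0) :
    Nat.gcd n (x ^ w ^ k - 1)
        = Nat.gcd (n / w) (x - 1) * Nat.gcd n ((x ^ w ^ k - 1) / (x - 1)) ∧
    Nat.lcm (x - 1) (Nat.gcd n (x ^ w ^ k - 1))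
        = (x - 1) / w * Nat.gcd n ((x ^ w ^ k - 1) / (x - 1)) := by
  have hD : x ^ w ^ k - 1 = (x - 1) * ∑ i ∈ range (w ^ k), x ^ i := by
    rw [Nat.geomSum_eq hx, Nat.mul_div_cancel' (Nat.sub_one_dvd_pow_sub_one x _)]
  rw [← Nat.geomSum_eq hx, hD]
  have hM : x - 1 ≠ 0 := by omega
  have hK : ∑ i ∈ range (w ^ k), x ^ i ≠ 0 :=
    (sum_pos (fun i _ => by positivity) (by simp [hw.ne_zero])).ne'
  have hwM : w ∣ x - 1 := (Nat.modEq_iff_dvd' (by omega)).1 hxw.symm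
  have hwK : w ∣ ∑ i ∈ range (w ^ k), x ^ i := (sum_range_pow_dvd_iff hxw).2 (dvd_pow_self w hk)
  have hMK : ∀ p, p.Prime → p ∣ x - 1 → p ∣ ∑ i ∈ range (w ^ k), x ^ i → p = w :=
    fun p hp hpM hpK => (Nat.prime_dvd_prime_iff_eq hp hw).1 <| hp.dvd_of_dvd_pow <|
      (sum_range_pow_dvd_iff ((Nat.modEq_iff_dvd' (by omega)).2 hpM).symm).1 hpK
  exact ⟨gcd_mul_eq_gcd_div_mul_gcd hw hn hM hK hwM hwK hMK,
    lcm_gcd_mul_eq_div_mul_gcd hw hn hM hK hwM hwK hMK⟩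

theorem gcd_lcm_identities_case_one_general (w q n : ℕ) (hw : w.Prime)
    (hq : IsPrimePow q) (hn : 0 < n)
    (hord : orderOf (q : ZMod (rad n)) = w ^ 2)
    (hv1 : n.factorization w = 1) :
    Nat.gcd n (q ^ w ^ 2 - 1)
        = Nat.gcd (n / w) (q - 1) * Nat.gcd n ((q ^ w ^ 2 - 1) / (q - 1)) ∧
    Nat.gcd n (q ^ w ^ 2 - 1)
        = Nat.gcd (n / w) (q ^ w - 1) * Nat.gcd n ((q ^ w ^ 2 - 1) / (q ^ w - 1)) ∧
    Nat.lcm (q - 1) (Nat.gcd n (q ^ w ^ 2 - 1))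
        = ((q - 1) / w) * Nat.gcd n ((q ^ w ^ 2 - 1) / (q - 1)) ∧
    Nat.lcm (q ^ w - 1) (Nat.gcd n (q ^ w ^ 2 - 1))
        = ((q ^ w - 1) / w) * Nat.gcd n ((q ^ w ^ 2 - 1) / (q ^ w - 1)) := by
  have hwn : w ∣ n := Nat.dvd_of_factorization_pos (by omega)
  have hwrad : w ∣ rad n := dvd_prod_of_mem _ (Nat.mem_primeFactors.2 ⟨hw, hwn, hn.ne'⟩)
  have hq_rad : q ^ w ^ 2 ≡ 1 [MOD rad n] := by
    rw [← ZMod.natCast_eq_natCast_iff]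
    push_cast
    rw [← hord, pow_orderOf_eq_one]
  have hqw : q ≡ 1 [MOD w] := modEq_one_of_pow_prime_pow_modEq_one hw (hq_rad.of_dvd hwrad)
  obtain ⟨h1, h3⟩ := gcd_lcm_pow_prime_pow_sub_one hw hv1 hq.two_le hqw two_ne_zero
  obtain ⟨h2, h4⟩ := gcd_lcm_pow_prime_pow_sub_one (k := 1) hw hv1
    (hq.two_le.trans (Nat.le_self_pow hw.ne_zero q)) (by simpa using hqw.pow w) one_ne_zero
  rw [pow_one, ← pow_mul, ← sq] at h2 h4
  exact ⟨h1, h2, h3, h4⟩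

/-- Let `w` be an odd prime, `q` a prime power, and `n` a positive integer with
`gcd(n,q) = 1` and `ord_{rad(n)}(q) = w²`. If `1 = v_w(n) < v_w(q^{w²}−1)`, then
`gcd(n, q^{w²}−1) = gcd(n/w, q−1)·gcd(n, (q^{w²}−1)/(q−1))
= gcd(n/w, q^w−1)·gcd(n, (q^{w²}−1)/(q^w−1))`; moreover
`lcm(q−1, gcd(n, q^{w²}−1)) = ((q−1)/w)·gcd(n, (q^{w²}−1)/(q−1))` and
`lcm(q^w−1, gcd(n, q^{w²}−1)) = ((q^w−1)/w)·gcd(n, (q^{w²}−1)/(q^w−1))`. -/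
theorem gcd_lcm_identities_case_one (w q n : ℕ) (hw : w.Prime) (hwodd : Odd w)
    (hq : IsPrimePow q) (hn : 0 < n) (hcop : Nat.gcd n q = 1)
    (hord : orderOf (q : ZMod (rad n)) = w ^ 2)
    (hv1 : n.factorization w = 1)
    (hv2 : 1 < (q ^ w ^ 2 - 1).factorization w) :
    Nat.gcd n (q ^ w ^ 2 - 1)
        = Nat.gcd (n / w) (q - 1) * Nat.gcd n ((q ^ w ^ 2 - 1) / (q - 1)) ∧
    Nat.gcd n (q ^ w ^ 2 - 1)
        = Nat.gcd (n / w) (q ^ w - 1) * Nat.gcd n ((q ^ w ^ 2 - 1) / (q ^ w - 1)) ∧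
    Nat.lcm (q - 1) (Nat.gcd n (q ^ w ^ 2 - 1))
        = ((q - 1) / w) * Nat.gcd n ((q ^ w ^ 2 - 1) / (q - 1)) ∧
    Nat.lcm (q ^ w - 1) (Nat.gcd n (q ^ w ^ 2 - 1))
        = ((q ^ w - 1) / w) * Nat.gcd n ((q ^ w ^ 2 - 1) / (q ^ w - 1)) :=
  gcd_lcm_identities_case_one_general w q n hw hq hn hord hv1
end

section
/- Let q be a prime power and n a positive integer with gcd(n,q) = 1 and ord_{rad(n)}(q) = 4. Let b ∈ {0, 1, 2} be such that gcd(n, q−1, (q^4−1)/(q−1)) = 2^b. Then: (1) gcd(n, q^4−1) = gcd(n, q−1)·gcd(n, (q^4−1)/(q−1)) if v_2(n) ≥ v_2(q^4−1) or b = 0; gcd(n, q^4−1) = gcd(n, q−1)·gcd(n/2, (q^4−1)/(q−1)) if v_2(n) < v_2(q^4−1) and b = 1; and gcd(n, q^4−1) = gcd(n/4, q−1)·gcd(n, (q^4−1)/(q−1)) if v_2(n) < v_2(q^4−1) and b = 2. (2) gcd(n, q^4−1) = gcd(n, q^2−1)·gcd(n, (q^4−1)/(q^2−1)) if v_2(n)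 ≥ v_2(q^4−1) or b = 0; and gcd(n, q^4−1) = gcd(n/2, q^2−1)·gcd(n, (q^4−1)/(q^2−1)) if v_2(n) < v_2(q^4−1) and b ≠ 0. -/
/-!
Write `q⁴ - 1 = (q - 1)(q + 1)(q² + 1)`. An odd prime `p` cannot divide both `q - 1` and
`(q + 1)(q² + 1) ≡ 4 [MOD p]`, nor both `q² - 1` and `q² + 1`, so away from `2` the gcd with `n` splits
multiplicatively along both factorisations. At `2`, either `q` is even and `q ± 1`, `q² + 1` are
odd, or `min (v₂(q - 1), v₂(q + 1)) = 1` and `v₂(q² + 1) = 1`; the hypothesis says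
`min (v₂ n, v₂(q - 1), v₂((q⁴ - 1)/(q - 1))) = b`, and dividing `n` by `2` or `4` removes exactly
the excess of `2` that the product of the two gcds would otherwise count twice.
-/

theorem Nat.Prime.eq_two_of_dvd_of_dvd_add_two {p x : ℕ} (hp : p.Prime) (hx : p ∣ x)
    (hx2 : p ∣ x + 2) : p = 2 :=
  (Nat.prime_dvd_prime_iff_eq hp Nat.prime_two).mp ((Nat.dvd_add_right hx).mp hx2)

theorem Nat.factorization_div_prime_pow {n p k : ℕ} (hn : n ≠ 0) (hp : p.Prime)
    (hk : k ≤ n.factorization p) :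
    (n / p ^ k).factorization = n.factorization - Finsupp.single p k := by
  rw [Nat.factorization_div ((hp.pow_dvd_iff_le_factorization hn).mpr hk), hp.factorization_pow]

theorem Nat.Prime.factorization_self_mul {p m : ℕ} (hp : p.Prime) (hm : m ≠ 0) :
    (p * m).factorization p = m.factorization p + 1 := by
  rw [Nat.factorization_mul hp.ne_zero hm, Finsupp.add_apply, hp.factorization_self, add_comm]

theorem Odd.factorization_two_eq_zero {m : ℕ} (hm : Odd m) : m.factorization 2 = 0 :=
  Nat.factorization_eq_zero_of_not_dvd hm.not_two_dvd_nat

theorem gcd_mul_eq_gcd_div_two_pow_mul {n A B i j : ℕ} (hn : n ≠ 0) (hA : A ≠ 0) (hB : B ≠ 0)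
    (hi : i ≤ n.factorization 2) (hj : j ≤ n.factorization 2)
    (hAB : ∀ p, p.Prime → p ∣ A → p ∣ B → p = 2)
    (h2 : min (n.factorization 2) (A.factorization 2 + B.factorization 2) =
      min (n.factorization 2 - i) (A.factorization 2) +
        min (n.factorization 2 - j) (B.factorization 2)) :
    Nat.gcd n (A * B) = Nat.gcd (n / 2 ^ i) A * Nat.gcd (n / 2 ^ j) B := by
  have hu : n / 2 ^ i ≠ 0 := (Nat.div_ne_zero_iff_of_dvd
    ((Nat.prime_two.pow_dvd_iff_le_factorization hn).mpr hi)).mpr ⟨hn, by positivity⟩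
  have hv : n / 2 ^ j ≠ 0 := (Nat.div_ne_zero_iff_of_dvd
    ((Nat.prime_two.pow_dvd_iff_le_factorization hn).mpr hj)).mpr ⟨hn, by positivity⟩
  refine Nat.eq_of_factorization_eq (Nat.gcd_ne_zero_left hn)
    (mul_ne_zero (Nat.gcd_ne_zero_left hu) (Nat.gcd_ne_zero_left hv)) fun p => ?_
  rw [Nat.factorization_mul (Nat.gcd_ne_zero_left hu) (Nat.gcd_ne_zero_left hv),
    Nat.factorization_gcd hn (mul_ne_zero hA hB), Nat.factorization_gcd hu hA,
    Nat.factorization_gcd hv hB, Nat.factorization_mul hA hB,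
    Nat.factorization_div_prime_pow hn Nat.prime_two hi,
    Nat.factorization_div_prime_pow hn Nat.prime_two hj]
  simp only [Finsupp.inf_apply, Finsupp.add_apply, Finsupp.tsub_apply, Finsupp.single_apply]
  by_cases hp2 : p = 2
  · subst hp2
    simpa using h2
  by_cases hp : p.Prime
  · have : A.factorization p = 0 ∨ B.factorization p = 0 := by
      by_contra! h
      exact hp2 (hAB p hp (Nat.dvd_of_factorization_pos h.1) (Nat.dvd_of_factorization_pos h.2))
    simp only [Ne.symm hp2, if_false]
    omega
  · simp [Nat.factorization_eq_zero_of_not_prime _ hp]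

theorem pow_four_sub_one_eq_sq_sub_one_mul (q : ℕ) : q ^ 4 - 1 = (q ^ 2 - 1) * (q ^ 2 + 1) := by
  rw [show q ^ 4 = (q ^ 2) ^ 2 by ring, ← one_pow 2, Nat.sq_sub_sq, one_pow, mul_comm]

theorem sq_sub_one_eq_sub_one_mul (q : ℕ) : q ^ 2 - 1 = (q - 1) * (q + 1) := by
  rw [← one_pow 2, Nat.sq_sub_sq, one_pow, mul_comm]

theorem pow_four_sub_one_eq_sub_one_mul (q : ℕ) :
    q ^ 4 - 1 = (q - 1) * ((q + 1) * (q ^ 2 + 1)) := by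
  rw [pow_four_sub_one_eq_sq_sub_one_mul, sq_sub_one_eq_sub_one_mul, mul_assoc]

section PowFourSubOne

variable {q : ℕ}

theorem pow_four_sub_one_div_sub_one (hq : 2 ≤ q) :
    (q ^ 4 - 1) / (q - 1) = (q + 1) * (q ^ 2 + 1) := by
  rw [pow_four_sub_one_eq_sub_one_mul, Nat.mul_div_cancel_left _ (by omega)]

theorem pow_four_sub_one_div_sq_sub_one (hq : 2 ≤ q) :
    (q ^ 4 - 1) / (q ^ 2 - 1) = q ^ 2 + 1 := by
  have : 1 < q ^ 2 := Nat.one_lt_pow two_ne_zero hq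
  rw [pow_four_sub_one_eq_sq_sub_one_mul, Nat.mul_div_cancel_left _ (by omega)]

theorem factorization_pow_four_sub_one (hq : 2 ≤ q) (p : ℕ) :
    (q ^ 4 - 1).factorization p =
      (q - 1).factorization p + (q + 1).factorization p + (q ^ 2 + 1).factorization p := by
  rw [pow_four_sub_one_eq_sub_one_mul, Nat.factorization_mul (by omega) (by positivity),
    Nat.factorization_mul (by omega) (by positivity)]
  simp only [Finsupp.add_apply, add_assoc]

theorem eq_two_of_dvd_sq_sub_one_of_dvd_sq_add_one {p : ℕ} (hp : p.Prime) (hq : q ≠ 0)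
    (h₁ : p ∣ q ^ 2 - 1) (h₂ : p ∣ q ^ 2 + 1) : p = 2 := by
  have : 0 < q ^ 2 := by positivity
  exact hp.eq_two_of_dvd_of_dvd_add_two h₁ (by rwa [show q ^ 2 - 1 + 2 = q ^ 2 + 1 by omega])

theorem eq_two_of_dvd_sub_one_of_dvd_mul {p : ℕ} (hp : p.Prime) (hq : q ≠ 0)
    (h₁ : p ∣ q - 1) (h₂ : p ∣ (q + 1) * (q ^ 2 + 1)) : p = 2 := by
  rcases hp.dvd_mul.mp h₂ with h | h
  · exact hp.eq_two_of_dvd_of_dvd_add_two h₁ (by rwa [show q - 1 + 2 = q + 1 by omega])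
  · exact eq_two_of_dvd_sq_sub_one_of_dvd_sq_add_one hp hq
      (h₁.trans (sq_sub_one_eq_sub_one_mul q ▸ dvd_mul_right _ _)) h

theorem factorization_two_sub_one_add_one_cases (hq : 2 ≤ q) :
    ((q - 1).factorization 2 = 0 ∧ (q + 1).factorization 2 = 0 ∧
        (q ^ 2 + 1).factorization 2 = 0) ∨
      (min ((q - 1).factorization 2) ((q + 1).factorization 2) = 1 ∧
        (q ^ 2 + 1).factorization 2 = 1) := by
  rcases Nat.even_or_odd q with ⟨k, rfl⟩ | ⟨k, rfl⟩
  · left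
    refine ⟨Odd.factorization_two_eq_zero ⟨k - 1, by omega⟩,
      Odd.factorization_two_eq_zero ⟨k, by omega⟩,
      Odd.factorization_two_eq_zero ⟨2 * k ^ 2, by ring⟩⟩
  · right
    have hk : k ≠ 0 := by omega
    rw [show 2 * k + 1 - 1 = 2 * k by omega, show 2 * k + 1 + 1 = 2 * (k + 1) by ring,
      show (2 * k + 1) ^ 2 + 1 = 2 * (2 * k ^ 2 + 2 * k + 1) by ring,
      Nat.prime_two.factorization_self_mul hk, Nat.prime_two.factorization_self_mul (by omega),
      Nat.prime_two.factorization_self_mul (by omega),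
      Odd.factorization_two_eq_zero (m := 2 * k ^ 2 + 2 * k + 1) ⟨k ^ 2 + k, by ring⟩]
    refine ⟨?_, rfl⟩
    rcases Nat.even_or_odd k with hk | hk
    · rw [hk.add_one.factorization_two_eq_zero]
      omega
    · rw [hk.factorization_two_eq_zero]
      omega

theorem factorization_two_gcd_gcd_pow_four_sub_one_div {n b : ℕ} (hq : 2 ≤ q) (hn : n ≠ 0)
    (hgcd : Nat.gcd (Nat.gcd n (q - 1)) ((q ^ 4 - 1) / (q - 1)) = 2 ^ b) :
    min (min (n.factorization 2) ((q - 1).factorization 2))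
      ((q + 1).factorization 2 + (q ^ 2 + 1).factorization 2) = b := by
  have h := congrArg (fun m => m.factorization 2) hgcd
  rw [pow_four_sub_one_div_sub_one hq] at h
  rwa [Nat.factorization_gcd (Nat.gcd_ne_zero_left hn) (by positivity),
    Nat.factorization_gcd hn (by omega), Nat.factorization_mul (by positivity) (by positivity),
    Nat.prime_two.factorization_pow, Finsupp.single_eq_same] at h

theorem gcd_pow_four_sub_one_eq_gcd_sub_one_mul {n i j : ℕ} (hq : 2 ≤ q) (hn : n ≠ 0)
    (hi : i ≤ n.factorization 2) (hj : j ≤ n.factorization 2)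
    (h2 : min (n.factorization 2) ((q ^ 4 - 1).factorization 2) =
      min (n.factorization 2 - i) ((q - 1).factorization 2) +
        min (n.factorization 2 - j) ((q + 1).factorization 2 + (q ^ 2 + 1).factorization 2)) :
    Nat.gcd n (q ^ 4 - 1) =
      Nat.gcd (n / 2 ^ i) (q - 1) * Nat.gcd (n / 2 ^ j) ((q ^ 4 - 1) / (q - 1)) := by
  rw [factorization_pow_four_sub_one hq, add_assoc] at h2
  rw [pow_four_sub_one_div_sub_one hq, pow_four_sub_one_eq_sub_one_mul]
  refine gcd_mul_eq_gcd_div_two_pow_mul hn (by omega) (by positivity) hi hj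
    (fun p hp => eq_two_of_dvd_sub_one_of_dvd_mul hp (by omega)) ?_
  rwa [Nat.factorization_mul (by positivity) (by positivity), Finsupp.add_apply]

theorem gcd_pow_four_sub_one_eq_gcd_sq_sub_one_mul {n i j : ℕ} (hq : 2 ≤ q) (hn : n ≠ 0)
    (hi : i ≤ n.factorization 2) (hj : j ≤ n.factorization 2)
    (h2 : min (n.factorization 2) ((q ^ 4 - 1).factorization 2) =
      min (n.factorization 2 - i) ((q - 1).factorization 2 + (q + 1).factorization 2) +
        min (n.factorization 2 - j) ((q ^ 2 + 1).factorization 2)) :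
    Nat.gcd n (q ^ 4 - 1) =
      Nat.gcd (n / 2 ^ i) (q ^ 2 - 1) * Nat.gcd (n / 2 ^ j) ((q ^ 4 - 1) / (q ^ 2 - 1)) := by
  have : 1 < q ^ 2 := Nat.one_lt_pow two_ne_zero hq
  rw [factorization_pow_four_sub_one hq] at h2
  rw [pow_four_sub_one_div_sq_sub_one hq, pow_four_sub_one_eq_sq_sub_one_mul]
  refine gcd_mul_eq_gcd_div_two_pow_mul hn (by omega) (by positivity) hi hj
    (fun p hp => eq_two_of_dvd_sq_sub_one_of_dvd_sq_add_one hp (by omega)) ?_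
  rwa [sq_sub_one_eq_sub_one_mul, Nat.factorization_mul (by omega) (by positivity),
    Finsupp.add_apply]

end PowFourSubOne

theorem gcd_identities_order_four_general (q n b : ℕ) (hq : IsPrimePow q) (hn : 0 < n)
    (hgcd : Nat.gcd (Nat.gcd n (q - 1)) ((q ^ 4 - 1) / (q - 1)) = 2 ^ b) :
    ((q ^ 4 - 1).factorization 2 ≤ n.factorization 2 ∨ b = 0 →
      Nat.gcd n (q ^ 4 - 1)
        = Nat.gcd n (q - 1) * Nat.gcd n ((q ^ 4 - 1) / (q - 1))) ∧
    (n.factorization 2 < (q ^ 4 - 1).factorization 2 ∧ b = 1 →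
      Nat.gcd n (q ^ 4 - 1)
        = Nat.gcd n (q - 1) * Nat.gcd (n / 2) ((q ^ 4 - 1) / (q - 1))) ∧
    (n.factorization 2 < (q ^ 4 - 1).factorization 2 ∧ b = 2 →
      Nat.gcd n (q ^ 4 - 1)
        = Nat.gcd (n / 4) (q - 1) * Nat.gcd n ((q ^ 4 - 1) / (q - 1))) ∧
    ((q ^ 4 - 1).factorization 2 ≤ n.factorization 2 ∨ b = 0 →
      Nat.gcd n (q ^ 4 - 1)
        = Nat.gcd n (q ^ 2 - 1) * Nat.gcd n ((q ^ 4 - 1) / (q ^ 2 - 1))) ∧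
    (n.factorization 2 < (q ^ 4 - 1).factorization 2 ∧ b ≠ 0 →
      Nat.gcd n (q ^ 4 - 1)
        = Nat.gcd (n / 2) (q ^ 2 - 1) * Nat.gcd n ((q ^ 4 - 1) / (q ^ 2 - 1))) := by
  have hq2 := hq.two_le
  have hv := factorization_pow_four_sub_one hq2 2
  have hcases := factorization_two_sub_one_add_one_cases hq2
  have hb := factorization_two_gcd_gcd_pow_four_sub_one_div hq2 hn.ne' hgcd
  refine ⟨fun h => ?_, fun h => ?_, fun h => ?_, fun h => ?_, fun h => ?_⟩
  · simpa using gcd_pow_four_sub_one_eq_gcd_sub_one_mul (i := 0) (j := 0) hq2 hn.ne'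
      (by omega) (by omega) (by omega)
  · simpa using gcd_pow_four_sub_one_eq_gcd_sub_one_mul (i := 0) (j := 1) hq2 hn.ne'
      (by omega) (by omega) (by omega)
  · simpa using gcd_pow_four_sub_one_eq_gcd_sub_one_mul (i := 2) (j := 0) hq2 hn.ne'
      (by omega) (by omega) (by omega)
  · simpa using gcd_pow_four_sub_one_eq_gcd_sq_sub_one_mul (i := 0) (j := 0) hq2 hn.ne'
      (by omega) (by omega) (by omega)
  · simpa using gcd_pow_four_sub_one_eq_gcd_sq_sub_one_mul (i := 1) (j := 0) hq2 hn.ne'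
      (by omega) (by omega) (by omega)

/-- Let `q` be a prime power and `n` a positive integer with `gcd(n,q) = 1` and
`ord_{rad(n)}(q) = 4`. Let `b ∈ {0,1,2}` with `gcd(n, q−1, (q⁴−1)/(q−1)) = 2^b`. Then:
(1) `gcd(n, q⁴−1) = gcd(n, q−1)·gcd(n, (q⁴−1)/(q−1))` if `v₂(n) ≥ v₂(q⁴−1)` or `b = 0`;
`gcd(n, q⁴−1) = gcd(n, q−1)·gcd(n/2, (q⁴−1)/(q−1))` if `v₂(n) < v₂(q⁴−1)` and `b = 1`;
`gcd(n, q⁴−1) = gcd(n/4, q−1)·gcd(n, (q⁴−1)/(q−1))` if `v₂(n) < v₂(q⁴−1)` and `b = 2`.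
(2) `gcd(n, q⁴−1) = gcd(n, q²−1)·gcd(n, (q⁴−1)/(q²−1))` if `v₂(n) ≥ v₂(q⁴−1)` or `b = 0`;
`gcd(n, q⁴−1) = gcd(n/2, q²−1)·gcd(n, (q⁴−1)/(q²−1))` if `v₂(n) < v₂(q⁴−1)` and `b ≠ 0`. -/
theorem gcd_identities_order_four (q n b : ℕ) (hq : IsPrimePow q) (hn : 0 < n)
    (hcop : Nat.gcd n q = 1) (hord : orderOf (q : ZMod (rad n)) = 4)
    (hb : b ≤ 2)
    (hgcd : Nat.gcd (Nat.gcd n (q - 1)) ((q ^ 4 - 1) / (q - 1)) = 2 ^ b) :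
    ((q ^ 4 - 1).factorization 2 ≤ n.factorization 2 ∨ b = 0 →
      Nat.gcd n (q ^ 4 - 1)
        = Nat.gcd n (q - 1) * Nat.gcd n ((q ^ 4 - 1) / (q - 1))) ∧
    (n.factorization 2 < (q ^ 4 - 1).factorization 2 ∧ b = 1 →
      Nat.gcd n (q ^ 4 - 1)
        = Nat.gcd n (q - 1) * Nat.gcd (n / 2) ((q ^ 4 - 1) / (q - 1))) ∧
    (n.factorization 2 < (q ^ 4 - 1).factorization 2 ∧ b = 2 →
      Nat.gcd n (q ^ 4 - 1)
        = Nat.gcd (n / 4) (q - 1) * Nat.gcd n ((q ^ 4 - 1) / (q - 1))) ∧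
    ((q ^ 4 - 1).factorization 2 ≤ n.factorization 2 ∨ b = 0 →
      Nat.gcd n (q ^ 4 - 1)
        = Nat.gcd n (q ^ 2 - 1) * Nat.gcd n ((q ^ 4 - 1) / (q ^ 2 - 1))) ∧
    (n.factorization 2 < (q ^ 4 - 1).factorization 2 ∧ b ≠ 0 →
      Nat.gcd n (q ^ 4 - 1)
        = Nat.gcd (n / 2) (q ^ 2 - 1) * Nat.gcd n ((q ^ 4 - 1) / (q ^ 2 - 1))) :=
  gcd_identities_order_four_general q n b hq hn hgcd
end

section
/- Let w_1 and w_2 be two distinct odd primes, q a prime power, and n a positive integer with gcd(n,q) = 1 and ord_{rad(n)}(q) = w_1·w_2. If (v_{w_1}(n) = 0 or v_{w_1}(n) ≥ v_{w_1}(q^{w_1 w_2}−1)) and (v_{w_2}(n) = 0 or v_{w_2}(n) ≥ v_{w_2}(q^{w_1 w_2}−1)), then gcd(n, q^{w_1 w_2}−1) = gcd(n, q−1)·gcd(n, (q^{w_1 w_2}−1)/(q−1)) = gcd(n, q^{w_1}−1)·gcd(n, (q^{w_1 w_2}−1)/(q^{w_1}−1)) = gcd(n, q^{w_2}−1)·gcd(n,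 (q^{w_1 w_2}−1)/(q^{w_2}−1)). -/
open Finset

namespace Nat

theorem factorization_pow_sub_one_of_not_dvd {p x k : ℕ} (hpx : p ∣ x - 1) (hpk : ¬p ∣ k) :
    (x ^ k - 1).factorization p = (x - 1).factorization p := by
  have hk : k ≠ 0 := by rintro rfl; exact hpk (dvd_zero p)
  rcases le_or_gt x 1 with hx | hx
  · interval_cases x <;> simp [zero_pow hk]
  have hx1 : (x : ZMod p) = 1 := by
    rw [← Nat.sub_add_cancel hx.le, Nat.cast_add, (ZMod.natCast_eq_zero_iff _ _).2 hpx,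
      zero_add, Nat.cast_one]
  have hsum : ¬p ∣ ∑ i ∈ range k, x ^ i := by
    rw [← ZMod.natCast_eq_zero_iff, Nat.cast_sum]
    simpa [hx1, ZMod.natCast_eq_zero_iff] using hpk
  have hsum0 : ∑ i ∈ range k, x ^ i ≠ 0 := by rintro h; exact hsum (h ▸ dvd_zero p)
  rw [← geom_sum_mul_of_one_le hx.le k, Nat.factorization_mul hsum0 (by omega),
    Finsupp.add_apply, Nat.factorization_eq_zero_of_not_dvd hsum, zero_add]

theorem gcd_eq_gcd_mul_gcd_div_of_factorization {n d m : ℕ} (hm : m ≠ 0) (hdm : d ∣ m)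
    (h : ∀ p, p.Prime → 0 < d.factorization p → 0 < n.factorization p →
      m.factorization p = d.factorization p ∨ m.factorization p ≤ n.factorization p) :
    n.gcd m = n.gcd d * n.gcd (m / d) := by
  rcases eq_or_ne n 0 with rfl | hn
  · simp [Nat.mul_div_cancel' hdm]
  have hd : d ≠ 0 := by rintro rfl; exact hm (Nat.eq_zero_of_zero_dvd hdm)
  have hmd : m / d ≠ 0 := (Nat.div_pos (Nat.le_of_dvd (by omega) hdm) (by omega)).ne'
  refine Nat.eq_of_factorization_eq (Nat.gcd_ne_zero_left hn)
    (Nat.mul_ne_zero (Nat.gcd_ne_zero_left hn) (Nat.gcd_ne_zero_left hn)) fun p => ?_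
  by_cases hp : p.Prime
  · rw [Nat.factorization_mul (Nat.gcd_ne_zero_left hn) (Nat.gcd_ne_zero_left hn),
      Nat.factorization_gcd hn hm, Nat.factorization_gcd hn hd, Nat.factorization_gcd hn hmd,
      Nat.factorization_div hdm]
    simp only [Finsupp.inf_apply, Finsupp.add_apply, Finsupp.tsub_apply]
    have hle : d.factorization p ≤ m.factorization p :=
      (Nat.factorization_le_iff_dvd hd hm).2 hdm p
    by_cases hdp : d.factorization p = 0
    · omega
    by_cases hnp : n.factorization p = 0
    · omega
    rcases h p hp (by omega) (by omega) with h' | h' <;> omega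
  · simp [Nat.factorization_eq_zero_of_not_prime _ hp]

theorem gcd_pow_sub_one_eq_mul_of_dvd {n q s t : ℕ} (hq : 2 ≤ q) (ht : t ≠ 0) (hst : s ∣ t)
    (hv : ∀ p, p.Prime → p ∣ t → n.factorization p = 0 ∨
      (q ^ t - 1).factorization p ≤ n.factorization p) :
    n.gcd (q ^ t - 1) = n.gcd (q ^ s - 1) * n.gcd ((q ^ t - 1) / (q ^ s - 1)) := by
  have hqt : q ^ t - 1 ≠ 0 := Nat.sub_ne_zero_of_lt (Nat.one_lt_pow ht (by omega))
  refine gcd_eq_gcd_mul_gcd_div_of_factorization hqt (Nat.pow_sub_one_dvd_pow_sub_one q hst)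
    fun p hp hps hpn => ?_
  by_cases hpt : p ∣ t
  · exact Or.inr ((hv p hp hpt).resolve_left hpn.ne')
  · obtain ⟨k, rfl⟩ := hst
    rw [pow_mul]
    exact Or.inl (factorization_pow_sub_one_of_not_dvd (Nat.dvd_of_factorization_pos hps.ne')
      fun hpk => hpt (Dvd.dvd.mul_left hpk s))

end Nat

theorem gcd_identities_two_primes_case_one_general (w₁ w₂ q n : ℕ)
    (hw₁ : w₁.Prime) (hw₂ : w₂.Prime)
    (hq : IsPrimePow q)
    (hv₁ : n.factorization w₁ = 0 ∨
      (q ^ (w₁ * w₂) - 1).factorization w₁ ≤ n.factorization w₁)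
    (hv₂ : n.factorization w₂ = 0 ∨
      (q ^ (w₁ * w₂) - 1).factorization w₂ ≤ n.factorization w₂) :
    Nat.gcd n (q ^ (w₁ * w₂) - 1)
        = Nat.gcd n (q - 1) * Nat.gcd n ((q ^ (w₁ * w₂) - 1) / (q - 1)) ∧
    Nat.gcd n (q ^ (w₁ * w₂) - 1)
        = Nat.gcd n (q ^ w₁ - 1) * Nat.gcd n ((q ^ (w₁ * w₂) - 1) / (q ^ w₁ - 1)) ∧
    Nat.gcd n (q ^ (w₁ * w₂) - 1)
        = Nat.gcd n (q ^ w₂ - 1) * Nat.gcd n ((q ^ (w₁ * w₂) - 1) / (q ^ w₂ - 1)) := by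
  have split : ∀ s, s ∣ w₁ * w₂ → Nat.gcd n (q ^ (w₁ * w₂) - 1)
      = Nat.gcd n (q ^ s - 1) * Nat.gcd n ((q ^ (w₁ * w₂) - 1) / (q ^ s - 1)) := by
    refine fun s hs => Nat.gcd_pow_sub_one_eq_mul_of_dvd hq.two_le
      (Nat.mul_ne_zero hw₁.ne_zero hw₂.ne_zero) hs fun p hp hpw => ?_
    rcases hp.dvd_mul.1 hpw with h | h
    · rwa [(Nat.prime_dvd_prime_iff_eq hp hw₁).1 h]
    · rwa [(Nat.prime_dvd_prime_iff_eq hp hw₂).1 h]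
  exact ⟨by simpa using split 1 (one_dvd _), split w₁ (dvd_mul_right w₁ w₂),
    split w₂ (dvd_mul_left w₂ w₁)⟩

/-- Let `w₁, w₂` be two distinct odd primes, `q` a prime power, and `n` a positive
integer with `gcd(n,q) = 1` and `ord_{rad(n)}(q) = w₁w₂`. If
(`v_{w₁}(n) = 0` or `v_{w₁}(n) ≥ v_{w₁}(q^{w₁w₂}−1)`) and
(`v_{w₂}(n) = 0` or `v_{w₂}(n) ≥ v_{w₂}(q^{w₁w₂}−1)`), then
`gcd(n, q^{w₁w₂}−1) = gcd(n, q−1)·gcd(n, (q^{w₁w₂}−1)/(q−1))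
= gcd(n, q^{w₁}−1)·gcd(n, (q^{w₁w₂}−1)/(q^{w₁}−1))
= gcd(n, q^{w₂}−1)·gcd(n, (q^{w₁w₂}−1)/(q^{w₂}−1))`. -/
theorem gcd_identities_two_primes_case_one (w₁ w₂ q n : ℕ)
    (hw₁ : w₁.Prime) (hw₁odd : Odd w₁) (hw₂ : w₂.Prime) (hw₂odd : Odd w₂)
    (hne : w₁ ≠ w₂) (hq : IsPrimePow q) (hn : 0 < n) (hcop : Nat.gcd n q = 1)
    (hord : orderOf (q : ZMod (rad n)) = w₁ * w₂)
    (hv₁ : n.factorization w₁ = 0 ∨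
      (q ^ (w₁ * w₂) - 1).factorization w₁ ≤ n.factorization w₁)
    (hv₂ : n.factorization w₂ = 0 ∨
      (q ^ (w₁ * w₂) - 1).factorization w₂ ≤ n.factorization w₂) :
    Nat.gcd n (q ^ (w₁ * w₂) - 1)
        = Nat.gcd n (q - 1) * Nat.gcd n ((q ^ (w₁ * w₂) - 1) / (q - 1)) ∧
    Nat.gcd n (q ^ (w₁ * w₂) - 1)
        = Nat.gcd n (q ^ w₁ - 1) * Nat.gcd n ((q ^ (w₁ * w₂) - 1) / (q ^ w₁ - 1)) ∧
    Nat.gcd n (q ^ (w₁ * w₂) - 1)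
        = Nat.gcd n (q ^ w₂ - 1) * Nat.gcd n ((q ^ (w₁ * w₂) - 1) / (q ^ w₂ - 1)) :=
  gcd_identities_two_primes_case_one_general w₁ w₂ q n hw₁ hw₂ hq hv₁ hv₂
end

section
/- Let w_1 and w_2 be two distinct odd primes, q a prime power, and n a positive integer with gcd(n,q) = 1 and ord_{rad(n)}(q) = w_1·w_2. If 1 ≤ v_{w_1}(n) < v_{w_1}(q^{w_1 w_2}−1) and 1 ≤ v_{w_2}(n) < v_{w_2}(q^{w_1 w_2}−1), then gcd(n, q^{w_1 w_2}−1) = gcd(n/(w_1 w_2), q−1)·gcd(n, (q^{w_1 w_2}−1)/(q−1)) = gcd(n/w_2, q^{w_1}−1)·gcd(n, (q^{w_1 w_2}−1)/(q^{w_1}−1)) = gcd(n/w_1, q^{w_2}−1)·gcd(n, (q^{w_1 w_2}−1)/(q^{w_2}−1)). -/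
/-!
Write `q^{w₁w₂} - 1 = r^m - 1` with `r = q^s`, `m = w₁w₂/s` and `s ∈ {1, w₁, w₂}`; then `m` is odd
and squarefree. By lifting the exponent, `v_p(r^m - 1) = v_p(r - 1) + v_p(m)` for every prime
`p ∣ r - 1` (for `p = 2` because `m` is odd). Compare `p`-adic valuations of both sides: for
`p ∤ m` this says that `(r^m - 1)/(r - 1)` is prime to `p` whenever `p ∣ r - 1`. For `p ∣ m`,
`v_p(n) < v_p(r^m - 1)` forces `v_p(n) ≤ v_p(r - 1)` when `p ∣ r - 1`, so the factor `p` lost in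
`gcd(n/m, r - 1)` is exactly the one that `(r^m - 1)/(r - 1)` contributes.
-/

theorem Nat.Prime.not_dvd_of_dvd_sub_one {p r : ℕ} (hp : p.Prime) (hr : 1 ≤ r)
    (hpr : p ∣ r - 1) : ¬p ∣ r := fun h =>
  hp.not_dvd_one <| by simpa [Nat.sub_sub_self hr] using Nat.dvd_sub h hpr

theorem Nat.emultiplicity_pow_sub_one_of_not_dvd {p r m : ℕ} (hp : p.Prime) (hr : 1 ≤ r)
    (hpr : p ∣ r - 1) (hpm : ¬p ∣ m) :
    emultiplicity p (r ^ m - 1) = emultiplicity p (r - 1) := by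
  have hpr' := hp.not_dvd_of_dvd_sub_one hr hpr
  iterate 2 rw [← Int.natCast_emultiplicity]
  push_cast [hr, Nat.one_le_pow _ _ hr]
  rw [← Int.natCast_dvd_natCast] at hpr hpr' hpm
  push_cast [hr] at hpr
  simpa using
    emultiplicity_pow_sub_pow_of_prime (Nat.prime_iff_prime_int.mp hp) (y := 1) hpr hpr' hpm

theorem Nat.factorization_pow_sub_one_of_odd {p r m : ℕ} (hp : p.Prime) (hr : 2 ≤ r)
    (hm : Odd m) (hpr : p ∣ r - 1) :
    (r ^ m - 1).factorization p = (r - 1).factorization p + m.factorization p := by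
  have := Fact.mk hp
  have hm0 : m ≠ 0 := hm.pos.ne'
  have hrm : 1 < r ^ m := Nat.one_lt_pow hm0 (by omega)
  rw [← Nat.cast_inj (R := ℕ∞), Nat.cast_add]
  iterate 3 rw [Nat.factorization_def _ hp, padicValNat_eq_emultiplicity (by omega)]
  obtain rfl | hodd := hp.eq_two_or_odd'
  · have h2m : ¬2 ∣ m := Nat.not_even_iff_odd.mpr hm ∘ even_iff_two_dvd.mpr
    rw [emultiplicity_eq_zero.mpr h2m, add_zero]
    exact Nat.emultiplicity_pow_sub_one_of_not_dvd hp (by omega) hpr h2m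
  · simpa using Nat.emultiplicity_pow_sub_pow hp hodd (y := 1) hpr
      (hp.not_dvd_of_dvd_sub_one (by omega) hpr) m

theorem Nat.gcd_pow_sub_one_eq_gcd_div_mul_gcd {r m n : ℕ} (hr : 2 ≤ r) (hn : n ≠ 0)
    (hm : Odd m) (hsq : Squarefree m) (hmn : m ∣ n)
    (hv : ∀ p ∈ m.primeFactors, n.factorization p < (r ^ m - 1).factorization p) :
    n.gcd (r ^ m - 1) = (n / m).gcd (r - 1) * n.gcd ((r ^ m - 1) / (r - 1)) := by
  have hm0 : m ≠ 0 := hm.pos.ne'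
  have hr1 : r - 1 ≠ 0 := by omega
  have hrm : r ^ m - 1 ≠ 0 := by have := Nat.one_lt_pow hm0 (by omega : 1 < r); omega
  have hdvd : r - 1 ∣ r ^ m - 1 := by simpa using Nat.sub_dvd_pow_sub_pow r 1 m
  have hnm : n / m ≠ 0 := (Nat.div_pos (Nat.le_of_dvd (by omega) hmn) hm.pos).ne'
  have hquot : (r ^ m - 1) / (r - 1) ≠ 0 :=
    (Nat.div_pos (Nat.le_of_dvd (by omega) hdvd) (by omega)).ne'
  refine Nat.eq_of_factorization_eq (Nat.gcd_ne_zero_left hn)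
    (mul_ne_zero (Nat.gcd_ne_zero_left hnm) (Nat.gcd_ne_zero_left hn)) fun p => ?_
  rw [Nat.factorization_mul (Nat.gcd_ne_zero_left hnm) (Nat.gcd_ne_zero_left hn),
    Nat.factorization_gcd hn hrm, Nat.factorization_gcd hnm hr1, Nat.factorization_gcd hn hquot,
    Nat.factorization_div hmn, Nat.factorization_div hdvd]
  simp only [Finsupp.add_apply, Finsupp.inf_apply, Finsupp.tsub_apply]
  by_cases hp : p.Prime
  swap
  · simp [Nat.factorization_eq_zero_of_not_prime _ hp]
  have hμ : m.factorization p ≤ 1 := hsq.natFactorization_le_one p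
  have hμn : m.factorization p ≤ n.factorization p :=
    (Nat.factorization_le_iff_dvd hm0 hn).mpr hmn p
  have hbc : (r - 1).factorization p ≤ (r ^ m - 1).factorization p :=
    (Nat.factorization_le_iff_dvd hr1 hrm).mpr hdvd p
  have hlte : 0 < (r - 1).factorization p →
      (r ^ m - 1).factorization p = (r - 1).factorization p + m.factorization p :=
    fun hb => Nat.factorization_pow_sub_one_of_odd hp hr hm (Nat.dvd_of_factorization_pos hb.ne')
  have hlt : 0 < m.factorization p → n.factorization p < (r ^ m - 1).factorization p :=
    fun hμ => hv p (Nat.mem_primeFactors.mpr ⟨hp, Nat.dvd_of_factorization_pos hμ.ne', hm0⟩)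
  omega

theorem gcd_identities_two_primes_case_four_general (w₁ w₂ q n : ℕ)
    (hw₁ : w₁.Prime) (hw₁odd : Odd w₁) (hw₂ : w₂.Prime) (hw₂odd : Odd w₂)
    (hne : w₁ ≠ w₂) (hq : IsPrimePow q) (hn : 0 < n)
    (hv₁ : 1 ≤ n.factorization w₁ ∧
      n.factorization w₁ < (q ^ (w₁ * w₂) - 1).factorization w₁)
    (hv₂ : 1 ≤ n.factorization w₂ ∧
      n.factorization w₂ < (q ^ (w₁ * w₂) - 1).factorization w₂) :
    Nat.gcd n (q ^ (w₁ * w₂) - 1)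
        = Nat.gcd (n / (w₁ * w₂)) (q - 1) * Nat.gcd n ((q ^ (w₁ * w₂) - 1) / (q - 1)) ∧
    Nat.gcd n (q ^ (w₁ * w₂) - 1)
        = Nat.gcd (n / w₂) (q ^ w₁ - 1)
          * Nat.gcd n ((q ^ (w₁ * w₂) - 1) / (q ^ w₁ - 1)) ∧
    Nat.gcd n (q ^ (w₁ * w₂) - 1)
        = Nat.gcd (n / w₁) (q ^ w₂ - 1)
          * Nat.gcd n ((q ^ (w₁ * w₂) - 1) / (q ^ w₂ - 1)) := by
  have hq2 : 2 ≤ q := hq.two_le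
  have hw₁n : w₁ ∣ n := Nat.dvd_of_factorization_pos (by omega)
  have hw₂n : w₂ ∣ n := Nat.dvd_of_factorization_pos (by omega)
  have hcop : w₁.Coprime w₂ := (Nat.coprime_primes hw₁ hw₂).mpr hne
  refine ⟨?_, ?_, ?_⟩
  · refine Nat.gcd_pow_sub_one_eq_gcd_div_mul_gcd hq2 hn.ne' (hw₁odd.mul hw₂odd)
      (Nat.squarefree_mul_iff.mpr ⟨hcop, hw₁.squarefree, hw₂.squarefree⟩)
      (hcop.mul_dvd_of_dvd_of_dvd hw₁n hw₂n) ?_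
    simpa [Nat.primeFactors_mul hw₁.ne_zero hw₂.ne_zero, hw₁.primeFactors, hw₂.primeFactors,
      -Nat.mem_primeFactors] using ⟨hv₁.2, hv₂.2⟩
  · rw [pow_mul]
    refine Nat.gcd_pow_sub_one_eq_gcd_div_mul_gcd (hq2.trans (Nat.le_self_pow hw₁.ne_zero q))
      hn.ne' hw₂odd hw₂.squarefree hw₂n ?_
    simpa [hw₂.primeFactors, ← pow_mul, -Nat.mem_primeFactors] using hv₂.2
  · rw [mul_comm w₁ w₂, pow_mul]
    refine Nat.gcd_pow_sub_one_eq_gcd_div_mul_gcd (hq2.trans (Nat.le_self_pow hw₂.ne_zero q))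
      hn.ne' hw₁odd hw₁.squarefree hw₁n ?_
    simpa [hw₁.primeFactors, ← pow_mul, mul_comm w₂ w₁, -Nat.mem_primeFactors] using hv₁.2

/-- Let `w₁, w₂` be two distinct odd primes, `q` a prime power, and `n` a positive
integer with `gcd(n,q) = 1` and `ord_{rad(n)}(q) = w₁w₂`. If
`1 ≤ v_{w₁}(n) < v_{w₁}(q^{w₁w₂}−1)` and `1 ≤ v_{w₂}(n) < v_{w₂}(q^{w₁w₂}−1)`, then
`gcd(n, q^{w₁w₂}−1) = gcd(n/(w₁w₂), q−1)·gcd(n, (q^{w₁w₂}−1)/(q−1))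
= gcd(n/w₂, q^{w₁}−1)·gcd(n, (q^{w₁w₂}−1)/(q^{w₁}−1))
= gcd(n/w₁, q^{w₂}−1)·gcd(n, (q^{w₁w₂}−1)/(q^{w₂}−1))`. -/
theorem gcd_identities_two_primes_case_four (w₁ w₂ q n : ℕ)
    (hw₁ : w₁.Prime) (hw₁odd : Odd w₁) (hw₂ : w₂.Prime) (hw₂odd : Odd w₂)
    (hne : w₁ ≠ w₂) (hq : IsPrimePow q) (hn : 0 < n) (hcop : Nat.gcd n q = 1)
    (hord : orderOf (q : ZMod (rad n)) = w₁ * w₂)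
    (hv₁ : 1 ≤ n.factorization w₁ ∧
      n.factorization w₁ < (q ^ (w₁ * w₂) - 1).factorization w₁)
    (hv₂ : 1 ≤ n.factorization w₂ ∧
      n.factorization w₂ < (q ^ (w₁ * w₂) - 1).factorization w₂) :
    Nat.gcd n (q ^ (w₁ * w₂) - 1)
        = Nat.gcd (n / (w₁ * w₂)) (q - 1) * Nat.gcd n ((q ^ (w₁ * w₂) - 1) / (q - 1)) ∧
    Nat.gcd n (q ^ (w₁ * w₂) - 1)
        = Nat.gcd (n / w₂) (q ^ w₁ - 1)
          * Nat.gcd n ((q ^ (w₁ * w₂) - 1) / (q ^ w₁ - 1)) ∧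
    Nat.gcd n (q ^ (w₁ * w₂) - 1)
        = Nat.gcd (n / w₁) (q ^ w₂ - 1)
          * Nat.gcd n ((q ^ (w₁ * w₂) - 1) / (q ^ w₂ - 1)) :=
  gcd_identities_two_primes_case_four_general w₁ w₂ q n hw₁ hw₁odd hw₂ hw₂odd hne hq hn hv₁ hv₂
end
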